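/- arXiv:2304.04417 — 5 statements merged into one kernel-verified Lean document; each statement's English description precedes it below -/
import Mathlib

section
/- There exist constants A > 0 and c₀ > 0 such that for all 0 < c < c₀, | d(c)·(1 + d(c)) / (2·√(1 − e^{−c})) − 1 − 3·√c | ≤ A·c. -/
/-!
With `u = √(e^c - 1)` and `v = e^{c/2}` one has `v² = u² + 1`, the defining equation of `d`
becomes `d² = 4u²(d + 1)`, whose positive root is `d = 2u(u + v)`, and then `1 + d = (u + v)²`
and `√(1 - e^{-c}) = u / v`. So the quantity in question is exactly `v (u + v)³`, and the
expansion follows from `√c ≤ u ≤ √c + c` and `1 ≤ v ≤ 1 + c`.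
-/

open Real

lemma exp_sub_one_le_add_sq {c : ℝ} (hc₀ : 0 ≤ c) (hc₁ : c ≤ 1) : exp c - 1 ≤ c + c ^ 2 := by
  have := abs_exp_sub_one_sub_id_le (x := c) (by rwa [abs_of_nonneg hc₀])
  linarith [le_abs_self (exp c - 1 - c)]

lemma sqrt_exp_sub_one_le {c : ℝ} (hc₀ : 0 ≤ c) (hc₁ : c ≤ 1) : √(exp c - 1) ≤ √c + c := by
  refine sqrt_le_iff.mpr ⟨by positivity, ?_⟩
  have := exp_sub_one_le_add_sq hc₀ hc₁
  nlinarith [sq_sqrt hc₀, sqrt_nonneg c]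

lemma exp_half_le_one_add {c : ℝ} (hc₀ : 0 ≤ c) (hc₁ : c ≤ 1) : exp (c / 2) ≤ 1 + c := by
  have := exp_sub_one_le_add_sq (c := c / 2) (by positivity) (by linarith)
  nlinarith

lemma sqrt_one_sub_exp_neg (c : ℝ) : √(1 - exp (-c)) = √(exp c - 1) / exp (c / 2) := by
  have : 1 - exp (-c) = (exp c - 1) / exp c := by
    rw [exp_neg]; field_simp
  rw [this, sqrt_div' _ (exp_pos c).le, exp_half]

lemma eq_of_add_two_sq_div {u v d : ℝ} (hu : 0 < u) (hv : 0 < v) (huv : v ^ 2 = u ^ 2 + 1)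
    (hd : 0 < d) (h : (d + 2) ^ 2 / (d + 1) = 4 * v ^ 2) : d = 2 * u * (u + v) := by
  have hquad : d ^ 2 = 4 * u ^ 2 * (d + 1) := by
    rw [div_eq_iff (by positivity)] at h
    linear_combination h + 4 * (d + 1) * huv
  have hfac : (d - 2 * u * (u + v)) * (d - 2 * u * (u - v)) = 0 := by
    linear_combination hquad - 4 * u ^ 2 * huv
  rcases mul_eq_zero.mp hfac with h | h
  · linarith
  · nlinarith

lemma two_mul_mul_add_div_eq {u v : ℝ} (hu : 0 < u) (hv : 0 < v) (huv : v ^ 2 = u ^ 2 + 1) :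
    2 * u * (u + v) * (1 + 2 * u * (u + v)) / (2 * (u / v)) = v * (u + v) ^ 3 := by
  field_simp
  linear_combination (-1) * huv

lemma abs_mul_add_pow_three_sub_le {u v w : ℝ} (hw₀ : 0 ≤ w) (hw₁ : w ≤ 1)
    (hwu : w ≤ u) (huw : u ≤ w + w ^ 2) (hv₁ : 1 ≤ v) (hvw : v ≤ 1 + w ^ 2) :
    |v * (u + v) ^ 3 - 1 - 3 * w| ≤ 124 * w ^ 2 := by
  have hsum : 0 ≤ u + v := by linarith
  rw [abs_le]
  constructor
  · have : (1 + w) ^ 3 ≤ v * (u + v) ^ 3 := by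
      calc (1 + w) ^ 3 ≤ (u + v) ^ 3 := pow_le_pow_left₀ (by positivity) (by linarith) 3
        _ ≤ v * (u + v) ^ 3 := le_mul_of_one_le_left (pow_nonneg hsum 3) hv₁
    nlinarith [pow_nonneg hw₀ 3]
  · have : v * (u + v) ^ 3 ≤ (1 + w ^ 2) * (w + w ^ 2 + (1 + w ^ 2)) ^ 3 := by
      gcongr
    nlinarith [pow_le_pow_of_le_one hw₀ hw₁ (by norm_num : 2 ≤ 3),
      pow_le_pow_of_le_one hw₀ hw₁ (by norm_num : 2 ≤ 4),
      pow_le_pow_of_le_one hw₀ hw₁ (by norm_num : 2 ≤ 5),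
      pow_le_pow_of_le_one hw₀ hw₁ (by norm_num : 2 ≤ 6),
      pow_le_pow_of_le_one hw₀ hw₁ (by norm_num : 2 ≤ 7),
      pow_le_pow_of_le_one hw₀ hw₁ (by norm_num : 2 ≤ 8)]

/-- There exist `A > 0` and `c₀ > 0` such that for all `0 < c < c₀`, with `d = d(c)`
the unique positive solution of `(d+2)^2/(d+1) = 4·e^c`,
`| d(1+d)/(2√(1−e^{−c})) − 1 − 3√c | ≤ A·c`. -/
theorem slit_length_second_derivative_expansion :
    ∃ A c₀ : ℝ, 0 < A ∧ 0 < c₀ ∧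
      ∀ c d : ℝ, 0 < c → c < c₀ → 0 < d →
        (d + 2) ^ 2 / (d + 1) = 4 * Real.exp c →
        |d * (1 + d) / (2 * Real.sqrt (1 - Real.exp (-c))) - 1 - 3 * Real.sqrt c| ≤ A * c := by
  refine ⟨124, 1, by norm_num, by norm_num, fun c d hc hc₁ hd hdc => ?_⟩
  set u := √(exp c - 1)
  set v := exp (c / 2)
  have hu : 0 < u := sqrt_pos.mpr (by linarith [add_one_lt_exp hc.ne'])
  have hv : 0 < v := exp_pos _
  have hexp : exp c = v ^ 2 := by rw [← exp_nat_mul]; ring_nf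
  have huv : v ^ 2 = u ^ 2 + 1 := by rw [sq_sqrt (by linarith [add_one_le_exp c]), ← hexp]; ring
  rw [hexp] at hdc
  rw [sqrt_one_sub_exp_neg, eq_of_add_two_sq_div hu hv huv hd hdc,
    two_mul_mul_add_div_eq hu hv huv]
  have hwu : √c ≤ u := sqrt_le_sqrt (by linarith [add_one_le_exp c])
  have huw : u ≤ √c + √c ^ 2 := by
    rw [sq_sqrt hc.le]; exact sqrt_exp_sub_one_le hc.le hc₁.le
  have hvw : v ≤ 1 + √c ^ 2 := by
    rw [sq_sqrt hc.le]; exact exp_half_le_one_add hc.le hc₁.le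
  simpa only [sq_sqrt hc.le] using abs_mul_add_pow_three_sub_le (sqrt_nonneg c)
    (sqrt_le_one.mpr hc₁.le) hwu huw (one_le_exp (by positivity)) hvw
end

section
/- Let r, θ be real numbers, let c > 0, and set w = exp(r + iθ) ∈ ℂ. Then |w − 1|² < |(w+1)² − 4·e^c·w| if and only if (cosh r)·(cos θ) < e^c. -/
/-!
Write `(w + 1)² - 4tw = (w - 1)² + 4(1 - t)w`. Expanding the squared modulus gives
`|(w + 1)² - 4tw|² - |w - 1|⁴ = 8(t - 1)(2t|w|² - Re w · (|w|² + 1))`, so for `t > 1` the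
inequality holds exactly when `Re w · (|w|² + 1) < 2t|w|²`. For `w = e^(r + iθ)` one has
`|w|² + 1 = 2e^r cosh r`, and the condition becomes `cosh r · cos θ < t`.
-/

open Complex

theorem Complex.normSq_add_one_sq_sub_four_mul (w : ℂ) (t : ℝ) :
    normSq ((w + 1) ^ 2 - 4 * t * w) =
      normSq (w - 1) ^ 2 + 8 * (t - 1) * (2 * t * normSq w - w.re * (normSq w + 1)) := by
  simp only [normSq_apply, sub_re, sub_im, add_re, add_im, mul_re, mul_im, pow_two, one_re,
    one_im, ofReal_re, ofReal_im, re_ofNat, im_ofNat]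
  ring

theorem Complex.normSq_sub_one_lt_norm_add_one_sq_sub_four_mul_iff (w : ℂ) {t : ℝ}
    (ht : 1 < t) :
    normSq (w - 1) < ‖(w + 1) ^ 2 - 4 * t * w‖ ↔ w.re * (normSq w + 1) < 2 * t * normSq w := by
  rw [norm_def, Real.lt_sqrt (normSq_nonneg _), normSq_add_one_sq_sub_four_mul,
    lt_add_iff_pos_right, mul_pos_iff_of_pos_left (by linarith), sub_pos]

theorem Complex.exp_re_mul_normSq_add_one (r θ : ℝ) :
    (exp (r + θ * I)).re * (normSq (exp (r + θ * I)) + 1) =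
      2 * normSq (exp (r + θ * I)) * (Real.cosh r * Real.cos θ) := by
  have hnorm : normSq (exp (r + θ * I)) = Real.exp r ^ 2 := by
    rw [← Complex.sq_norm, norm_exp, add_re, ofReal_re, re_ofReal_mul, I_re, mul_zero, add_zero]
  rw [hnorm, exp_re]
  simp only [add_re, add_im, ofReal_re, ofReal_im, re_ofReal_mul, im_ofReal_mul, I_re, I_im,
    mul_zero, add_zero, zero_add]
  rw [Real.cosh_eq, Real.exp_neg]
  field_simp

/-- Let `r, θ` be real, `c > 0`, `w = exp(r + iθ)`.  Then
`|w − 1|² < |(w+1)² − 4·e^c·w|` iff `cosh r · cos θ < e^c`. -/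
theorem slit_inverse_derivative_modulus_criterion
    (r θ c : ℝ) (hc : 0 < c) (w : ℂ)
    (hw : w = Complex.exp ((r : ℂ) + (θ : ℂ) * Complex.I)) :
    ‖w - 1‖ ^ 2 < ‖(w + 1) ^ 2 - 4 * (Real.exp c : ℂ) * w‖ ↔
      Real.cosh r * Real.cos θ < Real.exp c := by
  have hpos : 0 < 2 * normSq w := by
    rw [hw]; exact mul_pos two_pos (normSq_pos.mpr (exp_ne_zero _))
  rw [Complex.sq_norm,
    normSq_sub_one_lt_norm_add_one_sq_sub_four_mul_iff w (Real.one_lt_exp_iff.mpr hc), hw,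
    exp_re_mul_normSq_add_one, ← hw, mul_right_comm 2 (Real.exp c), mul_lt_mul_iff_right₀ hpos]
end

section
/- Let ξ ∈ ℂ with ξ ≠ 0, and let Φ be analytic on an open neighbourhood of ξ with Φ'(ξ) = 0. Define q(z) = Φ'(z)·z·(z+ξ)/(z−ξ) for z ≠ ξ near ξ. Then q extends to an analytic function on a neighbourhood of ξ, and for every natural number m ≥ 0, the limit of the m-th derivative q^{(m)}(z) as z → ξ (z ≠ ξ) exists and equals m·Φ^{(m)}(ξ) + 3·ξ·Φ^{(m+1)}(ξ) + (2·ξ²/(m+1))·Φ^{(m+2)}(ξ). -/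
/-!
Since `Φ'(ξ) = 0`, the function `f = Φ'` factors as `f(z) = (z - ξ) g(z)` with `g = dslope f ξ`
analytic, so `Q(z) = z (z + ξ) g(z)` is an analytic function agreeing with `q` off `ξ`, and the
limits of `q⁽ᵐ⁾` are the values `Q⁽ᵐ⁾(ξ)`. To compute these, differentiate the identity
`(z - ξ) Q(z) = z (z + ξ) f(z)` `m + 1` times at `ξ` with the Leibniz rule for a linear factor,
`((z - a) h)⁽ⁿ⁾ = (z - a) h⁽ⁿ⁾ + n h⁽ⁿ⁻¹⁾`: the left side gives `(m + 1) Q⁽ᵐ⁾(ξ)`, the right side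
`2ξ² Φ⁽ᵐ⁺²⁾(ξ) + 3ξ (m + 1) Φ⁽ᵐ⁺¹⁾(ξ) + m (m + 1) Φ⁽ᵐ⁾(ξ)`.
-/

open Filter Topology

section IteratedDeriv

variable {𝕜 : Type*} [NontriviallyNormedField 𝕜]

theorem iteratedDeriv_sub_const_self (a x : 𝕜) (n : ℕ) :
    iteratedDeriv n (fun z => z - a) x = if n = 0 then x - a else if n = 1 then 1 else 0 := by
  rcases n with _ | _ | n <;> simp [iteratedDeriv_succ', iteratedDeriv_const]

theorem iteratedDeriv_sub_mul {h : 𝕜 → 𝕜} {x : 𝕜} {n : ℕ} (hh : ContDiffAt 𝕜 n h x) (a : 𝕜) :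
    iteratedDeriv n (fun z => (z - a) * h z) x
      = (x - a) * iteratedDeriv n h x + n * iteratedDeriv (n - 1) h x := by
  rw [iteratedDeriv_fun_mul (by fun_prop) hh]
  rcases n with _ | n
  · simp
  · rw [Finset.sum_range_succ', Finset.sum_range_succ']
    simp [iteratedDeriv_sub_const_self, add_comm]

theorem natCast_mul_iteratedDeriv_pred_deriv (f : 𝕜 → 𝕜) (x : 𝕜) (n : ℕ) :
    (n : 𝕜) * iteratedDeriv (n - 1) (deriv f) x = n * iteratedDeriv n f x := by
  rcases n with _ | n
  · simp
  · rw [Nat.add_sub_cancel, iteratedDeriv_succ']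

theorem sub_mul_dslope_of_eq_zero {f : 𝕜 → 𝕜} {a : 𝕜} (ha : f a = 0) (z : 𝕜) :
    (z - a) * dslope f a z = f z := by
  simpa [ha] using sub_smul_dslope f a z

theorem analyticAt_dslope {E : Type*} [NormedAddCommGroup E] [NormedSpace 𝕜 E] {f : 𝕜 → E}
    {a : 𝕜} (hf : AnalyticAt 𝕜 f a) : AnalyticAt 𝕜 (dslope f a) a :=
  let ⟨_, hp⟩ := hf
  hp.has_fpower_series_dslope_fslope.analyticAt

theorem tendsto_iteratedDeriv_nhdsNE_of_eqOn {E : Type*} [NormedAddCommGroup E]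
    [NormedSpace 𝕜 E] [CompleteSpace E] {f g : 𝕜 → E} {x : 𝕜} (hg : AnalyticAt 𝕜 g x)
    (hfg : Set.EqOn f g {x}ᶜ) (m : ℕ) :
    Tendsto (iteratedDeriv m f) (𝓝[≠] x) (𝓝 (iteratedDeriv m g x)) := by
  have hcont : ContinuousAt (iteratedDeriv m g) x := by
    rw [iteratedDeriv_eq_iterate]
    exact (hg.iterated_deriv m).continuousAt
  refine hcont.continuousWithinAt.tendsto.congr' ?_
  filter_upwards [self_mem_nhdsWithin] with z hz
  exact (hfg.iteratedDeriv_of_isOpen isOpen_compl_singleton m hz).symm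

end IteratedDeriv

section LoewnerExtension

variable {𝕜 : Type*} [NontriviallyNormedField 𝕜] [CompleteSpace 𝕜] [CharZero 𝕜]

theorem iteratedDeriv_mul_add_mul_dslope_deriv {Φ : 𝕜 → 𝕜} {ξ : 𝕜} (hΦ : AnalyticAt 𝕜 Φ ξ)
    (hΦ' : deriv Φ ξ = 0) (m : ℕ) :
    iteratedDeriv m (fun z => z * (z + ξ) * dslope (deriv Φ) ξ z) ξ
      = m * iteratedDeriv m Φ ξ + 3 * ξ * iteratedDeriv (m + 1) Φ ξ
        + (2 * ξ ^ 2 / (m + 1)) * iteratedDeriv (m + 2) Φ ξ := by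
  set f := deriv Φ
  set g := dslope f ξ
  have hf : AnalyticAt 𝕜 f ξ := hΦ.deriv
  have hg : AnalyticAt 𝕜 g ξ := analyticAt_dslope hf
  have hfactor :
      (fun z => (z - ξ) * (z * (z + ξ) * g z)) = fun z => (z - 0) * ((z - -ξ) * f z) := by
    funext z
    rw [← sub_mul_dslope_of_eq_zero hΦ' z]
    ring
  have key := congrArg (iteratedDeriv (m + 1) · ξ) hfactor
  rw [iteratedDeriv_sub_mul (by fun_prop : AnalyticAt 𝕜 _ ξ).contDiffAt,
    iteratedDeriv_sub_mul (by fun_prop : AnalyticAt 𝕜 _ ξ).contDiffAt, Nat.add_sub_cancel,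
    iteratedDeriv_sub_mul hf.contDiffAt, iteratedDeriv_sub_mul hf.contDiffAt,
    natCast_mul_iteratedDeriv_pred_deriv Φ ξ m] at key
  simp only [f, ← iteratedDeriv_succ'] at key
  have hm : (m : 𝕜) + 1 ≠ 0 := Nat.cast_add_one_ne_zero m
  field_simp
  push_cast at key
  linear_combination key

end LoewnerExtension

theorem loewner_vector_field_derivatives_at_singularity_general
    (ξ : ℂ) (Φ : ℂ → ℂ) (hΦ : AnalyticAt ℂ Φ ξ)
    (hΦ' : deriv Φ ξ = 0) (q : ℂ → ℂ)
    (hq : ∀ z : ℂ, z ≠ ξ → q z = deriv Φ z * z * (z + ξ) / (z - ξ)) :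
    (∃ Q : ℂ → ℂ, AnalyticAt ℂ Q ξ ∧ ∀ᶠ z in nhdsWithin ξ {ξ}ᶜ, Q z = q z) ∧
    ∀ m : ℕ,
      Filter.Tendsto (fun z : ℂ => iteratedDeriv m q z) (nhdsWithin ξ {ξ}ᶜ)
        (nhds ((m : ℂ) * iteratedDeriv m Φ ξ
          + 3 * ξ * iteratedDeriv (m + 1) Φ ξ
          + (2 * ξ ^ 2 / ((m : ℂ) + 1)) * iteratedDeriv (m + 2) Φ ξ)) := by
  set Q := fun z => z * (z + ξ) * dslope (deriv Φ) ξ z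
  have hQ : AnalyticAt ℂ Q ξ := by
    have := analyticAt_dslope hΦ.deriv
    fun_prop
  have hqQ : Set.EqOn q Q {ξ}ᶜ := fun z hz => by
    have hzξ : z - ξ ≠ 0 := sub_ne_zero.mpr hz
    rw [hq z hz, ← sub_mul_dslope_of_eq_zero hΦ' z]
    field_simp
    ring
  refine ⟨⟨Q, hQ, eventually_nhdsWithin_of_forall fun z hz => (hqQ hz).symm⟩, fun m => ?_⟩
  rw [← iteratedDeriv_mul_add_mul_dslope_deriv hΦ hΦ' m]
  exact tendsto_iteratedDeriv_nhdsNE_of_eqOn hQ hqQ m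

/-- Let `ξ ≠ 0` and `Φ` analytic near `ξ` with `Φ'(ξ) = 0`.  Define
`q(z) = Φ'(z)·z·(z+ξ)/(z−ξ)` for `z ≠ ξ`.  Then `q` extends analytically to a
neighbourhood of `ξ`, and for every `m ≥ 0` the limit of `q⁽ᵐ⁾(z)` as `z → ξ`
(`z ≠ ξ`) exists and equals
`m·Φ⁽ᵐ⁾(ξ) + 3ξ·Φ⁽ᵐ⁺¹⁾(ξ) + (2ξ²/(m+1))·Φ⁽ᵐ⁺²⁾(ξ)`. -/
theorem loewner_vector_field_derivatives_at_singularity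
    (ξ : ℂ) (hξ : ξ ≠ 0) (Φ : ℂ → ℂ) (hΦ : AnalyticAt ℂ Φ ξ)
    (hΦ' : deriv Φ ξ = 0) (q : ℂ → ℂ)
    (hq : ∀ z : ℂ, z ≠ ξ → q z = deriv Φ z * z * (z + ξ) / (z - ξ)) :
    (∃ Q : ℂ → ℂ, AnalyticAt ℂ Q ξ ∧ ∀ᶠ z in nhdsWithin ξ {ξ}ᶜ, Q z = q z) ∧
    ∀ m : ℕ,
      Filter.Tendsto (fun z : ℂ => iteratedDeriv m q z) (nhdsWithin ξ {ξ}ᶜ)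
        (nhds ((m : ℂ) * iteratedDeriv m Φ ξ
          + 3 * ξ * iteratedDeriv (m + 1) Φ ξ
          + (2 * ξ ^ 2 / ((m : ℂ) + 1)) * iteratedDeriv (m + 2) Φ ξ)) :=
  loewner_vector_field_derivatives_at_singularity_general ξ Φ hΦ hΦ' q hq
end

section
/- For every c ∈ (0,1), every normalized exterior slit map f of capacity c with associated β = β_c, and every z ∈ Δ, one has |f'(z)| = (|f(z)|/|z|) · |z − 1| / ( |z − e^{iβ}|^{1/2} · |z − e^{−iβ}|^{1/2} ). -/
/-- The exterior unit disc `Δ = {z : |z| > 1}`. -/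
def ExtDisc : Set ℂ := {z : ℂ | 1 < ‖z‖}

/-- A normalized exterior slit map of capacity `c` (with slit length `d`): a function
holomorphic and injective on `Δ`, with image `Δ` minus the radial slit `(1, 1+d]`,
satisfying `f(z)/z → e^c` as `|z| → ∞`, and continuous on `{|z| ≥ 1}` (we regard `f`
as its continuous extension to the closed exterior disc). -/
def IsSlitMap (c d : ℝ) (f : ℂ → ℂ) : Prop :=
  ContinuousOn f {z : ℂ | 1 ≤ ‖z‖} ∧
  DifferentiableOn ℂ f ExtDisc ∧
  Set.InjOn f ExtDisc ∧
  f '' ExtDisc = ExtDisc \ {w : ℂ | ∃ x : ℝ, 1 < x ∧ x ≤ 1 + d ∧ w = (x : ℂ)} ∧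
  Filter.Tendsto (fun z : ℂ => f z / z) (Filter.comap (fun z : ℂ => ‖z‖) Filter.atTop)
    (nhds ((Real.exp c : ℝ) : ℂ))

open Complex Set Metric Filter Topology Bornology

/-!
Put `E = e^c`. The Joukowski map `w ↦ w + w⁻¹` sends the exterior disc minus the slit `(1, 1 + d]`
into `ℂ ∖ [-2, 4E - 2]`, because `(d + 2)² / (d + 1) = 4E` says exactly that the slit tip goes
to `4E - 2`; so `ζ = (f + f⁻¹ + 2) / E - 2` omits `[-2, 2]`. Composing with the branch `k` of
the inverse Joukowski map with values in `Δ` gives a holomorphic self-map `k ∘ ζ` of `Δ` with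
`k (ζ z) / z → 1` at `∞`; by the equality case of Schwarz's lemma it is the identity, i.e.
`f + f⁻¹ + 2 = E (z + z⁻¹ + 2)`. Letting `z → e^{iβ}`, where `f = 1`, gives
`E (e^{iβ} + e^{-iβ} + 2) = 4`. Differentiating the functional equation and eliminating
`f ± f⁻¹` yields `f'(z)² (z - e^{iβ}) (z - e^{-iβ}) z² = (z - 1)² f(z)²`; take moduli.
-/

lemma re_cpow_inv_two_pos {z : ℂ} (hz : z ∈ slitPlane) : 0 < (z ^ (2⁻¹ : ℂ)).re := by
  obtain ⟨harg, hz0⟩ := mem_slitPlane_iff_arg.mp hz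
  have him : (log z * 2⁻¹).im = arg z / 2 := by
    simp [log_im, div_eq_mul_inv]
  rw [cpow_def_of_ne_zero hz0, exp_re, him]
  have hcos : 0 < Real.cos (arg z / 2) := by
    apply Real.cos_pos_of_mem_Ioo
    constructor <;> linarith [neg_pi_lt_arg z, arg_le_pi z, lt_of_le_of_ne (arg_le_pi z) harg]
  positivity

section JoukowskiInverse

noncomputable def joukowskiInv (w : ℂ) : ℂ := w * (1 + (1 - 4 / w ^ 2) ^ (2⁻¹ : ℂ)) / 2

variable {w : ℂ}

lemma ne_zero_of_notMem_segment (hw : w ∉ ofReal '' Icc (-2) 2) : w ≠ 0 := by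
  rintro rfl
  exact hw ⟨0, by norm_num, by simp⟩

lemma one_sub_four_div_sq_mem_slitPlane (hw : w ∉ ofReal '' Icc (-2) 2) :
    1 - 4 / w ^ 2 ∈ slitPlane := by
  have hw0 := ne_zero_of_notMem_segment hw
  by_contra h
  obtain ⟨hre, him⟩ : (1 - 4 / w ^ 2).re ≤ 0 ∧ (1 - 4 / w ^ 2).im = 0 := by
    simpa [mem_slitPlane_iff, not_or, not_lt] using h
  set r := (4 / w ^ 2).re
  have hr : 1 ≤ r := by simp only [sub_re, one_re] at hre; linarith
  have hsq : w ^ 2 * r = 4 := by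
    have : (4 / w ^ 2 : ℂ) = r := ext rfl (by simpa using him)
    rw [← this]; field_simp
  have hre2 : (w.re ^ 2 - w.im ^ 2) * r = 4 := by
    simpa [pow_two] using congrArg re hsq
  have him2 : w.re * w.im + w.im * w.re = 0 ∨ r = 0 := by
    simpa [pow_two] using congrArg im hsq
  have hwim : w.im = 0 := by
    rcases him2 with h | h
    · rcases mul_eq_zero.mp (by linarith : w.re * w.im = 0) with h | h
      · rw [h] at hre2
        nlinarith [mul_nonneg (sq_nonneg w.im) (by linarith : (0:ℝ) ≤ r)]
      · exact h
    · linarith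
  rw [hwim] at hre2
  have hle : w.re ^ 2 ≤ 4 := by nlinarith [sq_nonneg w.re]
  refine hw ⟨w.re, ⟨?_, ?_⟩, ext rfl (by simp [hwim])⟩ <;> nlinarith

lemma joukowskiInv_mul (hw : w ∉ ofReal '' Icc (-2) 2) :
    joukowskiInv w * (w * (1 - (1 - 4 / w ^ 2) ^ (2⁻¹ : ℂ)) / 2) = 1 := by
  have hw0 := ne_zero_of_notMem_segment hw
  have hsq : ((1 - 4 / w ^ 2) ^ (2⁻¹ : ℂ)) ^ 2 = 1 - 4 / w ^ 2 := cpow_ofNat_inv_pow _ 2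
  rw [joukowskiInv]
  generalize (1 - 4 / w ^ 2) ^ (2⁻¹ : ℂ) = s at hsq ⊢
  field_simp at hsq ⊢
  linear_combination -hsq

lemma joukowskiInv_add_inv (hw : w ∉ ofReal '' Icc (-2) 2) :
    joukowskiInv w + (joukowskiInv w)⁻¹ = w := by
  rw [inv_eq_of_mul_eq_one_right (joukowskiInv_mul hw), joukowskiInv]
  ring

lemma one_lt_norm_joukowskiInv (hw : w ∉ ofReal '' Icc (-2) 2) : 1 < ‖joukowskiInv w‖ := by
  have hs := re_cpow_inv_two_pos (one_sub_four_div_sq_mem_slitPlane hw)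
  have hprod := joukowskiInv_mul hw
  set s := (1 - 4 / w ^ 2) ^ (2⁻¹ : ℂ)
  -- `joukowskiInv w` and `w (1 - s) / 2` are reciprocal, and `0 < s.re` makes the former larger
  have hlt : ‖1 - s‖ < ‖1 + s‖ := by
    rw [← sq_lt_sq₀ (norm_nonneg _) (norm_nonneg _), Complex.sq_norm, Complex.sq_norm,
      normSq_apply, normSq_apply]
    simp only [add_re, add_im, sub_re, sub_im, one_re, one_im]
    nlinarith
  have hk : ‖w * (1 - s) / 2‖ < ‖joukowskiInv w‖ := by
    have hw0 : 0 < ‖w‖ := norm_pos_iff.mpr (ne_zero_of_notMem_segment hw)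
    rw [joukowskiInv, norm_div, norm_div, norm_mul, norm_mul]
    gcongr
    norm_num
  replace hprod := congrArg norm hprod
  rw [norm_mul, norm_one] at hprod
  by_contra! hle
  nlinarith [mul_le_mul_of_nonneg_right hle (norm_nonneg (w * (1 - s) / 2))]

lemma differentiableAt_joukowskiInv (hw : w ∉ ofReal '' Icc (-2) 2) :
    DifferentiableAt ℂ joukowskiInv w := by
  have hw0 := ne_zero_of_notMem_segment hw
  have hbase : DifferentiableAt ℂ (fun w : ℂ => 1 - 4 / w ^ 2) w := by fun_prop (disch := simpa)
  exact (differentiableAt_id.mul ((hbase.cpow_const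
    (one_sub_four_div_sq_mem_slitPlane hw)).const_add 1)).div_const 2

lemma tendsto_joukowskiInv_div_cobounded :
    Tendsto (fun w => joukowskiInv w / w) (cobounded ℂ) (𝓝 1) := by
  have hbase : Tendsto (fun w : ℂ => 1 - 4 * w⁻¹ ^ 2) (cobounded ℂ) (𝓝 1) := by
    simpa using ((tendsto_inv₀_cobounded (α := ℂ)).pow 2).const_mul 4 |>.const_sub 1
  have hsqrt : Tendsto (fun w : ℂ => (1 + (1 - 4 * w⁻¹ ^ 2) ^ (2⁻¹ : ℂ)) / 2) (cobounded ℂ)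
      (𝓝 ((1 + 1 ^ (2⁻¹ : ℂ)) / 2)) :=
    (((continuousAt_cpow_const one_mem_slitPlane).tendsto.comp hbase).const_add 1).div_const 2
  rw [one_cpow, one_add_one_eq_two, div_self two_ne_zero] at hsqrt
  refine hsqrt.congr' ?_
  filter_upwards [eventually_ne_cobounded 0] with w hw
  rw [joukowskiInv, div_eq_mul_inv 4, inv_pow]
  field_simp

end JoukowskiInverse

lemma im_eq_zero_of_im_add_inv_eq_zero {w : ℂ} (hw : ‖w‖ ≠ 1) (h : (w + w⁻¹).im = 0) :
    w.im = 0 := by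
  have hn : normSq w ≠ 1 := by
    rwa [← Complex.sq_norm, ne_eq, pow_eq_one_iff_of_nonneg (norm_nonneg w) two_ne_zero]
  simp only [add_im, inv_im] at h
  rcases mul_eq_zero.mp (by linear_combination h : w.im * (1 - (normSq w)⁻¹) = 0) with h | h
  · exact h
  · exact absurd (inv_eq_one.mp (by linear_combination -h)) hn

lemma add_inv_add_two_notMem_Icc {d x : ℝ} (hd : 0 < d) (hx : 1 < |x|)
    (hslit : ¬(1 < x ∧ x ≤ 1 + d)) : x + x⁻¹ + 2 ∉ Icc 0 ((d + 2) ^ 2 / (d + 1)) := by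
  rintro ⟨hlo, hhi⟩
  have hx0 : x ≠ 0 := by rintro rfl; simp at hx; linarith
  have hsq : (x + x⁻¹ + 2) * x = (x + 1) ^ 2 := by field_simp; ring
  rcases lt_abs.mp hx with hx | hx
  · have hxd : 1 + d < x := by by_contra! h; exact hslit ⟨hx, h⟩
    rw [le_div_iff₀ (by linarith)] at hhi
    -- `x ↦ x + x⁻¹` is increasing on `(1, ∞)`
    nlinarith [mul_pos (by linarith : 0 < x - (1 + d)) (by nlinarith : 0 < (d + 1) * x - 1)]
  · nlinarith [sq_nonneg (x + 1)]

lemma add_inv_add_two_div_sub_two_notMem_segment {d E : ℝ} (hd : 0 < d)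
    (hdE : (d + 2) ^ 2 / (d + 1) = 4 * E) {w : ℂ} (hw : 1 < ‖w‖)
    (hslit : ¬∃ x : ℝ, 1 < x ∧ x ≤ 1 + d ∧ w = x) :
    (w + w⁻¹ + 2) / E - 2 ∉ ofReal '' Icc (-2) 2 := by
  rintro ⟨t, ⟨ht₁, ht₂⟩, hteq⟩
  have hE : 0 < E := by
    have : 0 < (d + 2) ^ 2 / (d + 1) := by positivity
    linarith
  have hsum : w + w⁻¹ + 2 = ((E * (t + 2) : ℝ) : ℂ) := by
    rw [eq_sub_iff_add_eq, eq_div_iff (ofReal_ne_zero.mpr hE.ne')] at hteq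
    push_cast
    linear_combination -hteq
  have hwim : w.im = 0 :=
    im_eq_zero_of_im_add_inv_eq_zero hw.ne' (by simpa using congrArg im hsum)
  obtain ⟨x, rfl⟩ : ∃ x : ℝ, w = x := ⟨w.re, ext rfl (by simp [hwim])⟩
  rw [norm_real, Real.norm_eq_abs] at hw
  refine add_inv_add_two_notMem_Icc hd hw (fun h => hslit ⟨x, h.1, h.2, rfl⟩) ?_
  have hx : x + x⁻¹ + 2 = E * (t + 2) := by exact_mod_cast hsum
  rw [hx, hdE]
  constructor <;> nlinarith

lemma isOpen_extDisc : IsOpen ExtDisc := isOpen_lt continuous_const continuous_norm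

lemma closure_extDisc : closure ExtDisc = {z : ℂ | 1 ≤ ‖z‖} := by
  have : ExtDisc = (closedBall (0 : ℂ) 1)ᶜ := by ext z; simp [ExtDisc]
  rw [this, closure_compl, interior_closedBall _ one_ne_zero]
  ext z
  simp

lemma ne_of_mem_extDisc_of_norm_le_one {z a : ℂ} (hz : z ∈ ExtDisc) (ha : ‖a‖ ≤ 1) : z ≠ a := by
  rintro rfl
  exact (lt_of_lt_of_le hz ha).false

lemma ne_zero_of_mem_extDisc {z : ℂ} (hz : z ∈ ExtDisc) : z ≠ 0 :=
  ne_of_mem_extDisc_of_norm_le_one hz (by simp)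

lemma inv_mem_extDisc {z : ℂ} (hz : z ∈ ball (0 : ℂ) 1) (hz0 : z ≠ 0) : z⁻¹ ∈ ExtDisc := by
  rw [mem_ball_zero_iff] at hz
  show 1 < ‖z⁻¹‖
  rw [norm_inv]
  exact one_lt_inv_iff₀.mpr ⟨norm_pos_iff.mpr hz0, hz⟩

lemma inv_mem_ball_of_mem_extDisc {z : ℂ} (hz : z ∈ ExtDisc) : z⁻¹ ∈ ball (0 : ℂ) 1 := by
  rw [mem_ball_zero_iff, norm_inv]
  exact inv_lt_one_of_one_lt₀ hz

lemma hasDerivAt_update_inv_inv {g : ℂ → ℂ}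
    (hlim : Tendsto (fun z => g z / z) (cobounded ℂ) (𝓝 1)) :
    HasDerivAt (Function.update (fun z => (g z⁻¹)⁻¹) 0 0) 1 0 := by
  rw [hasDerivAt_iff_tendsto_slope]
  have h := (hlim.comp tendsto_inv₀_nhdsNE_zero).inv₀ one_ne_zero
  rw [inv_one] at h
  refine h.congr' (eventually_nhdsWithin_of_forall fun z (hz : z ≠ 0) => ?_)
  rw [slope_def_field, Function.update_of_ne hz, Function.update_self, Function.comp_apply,
    sub_zero, sub_zero, inv_div, div_eq_mul_inv, div_eq_mul_inv, mul_comm]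

lemma eqOn_id_of_mapsTo_extDisc {g : ℂ → ℂ} (hg : DifferentiableOn ℂ g ExtDisc)
    (hmaps : MapsTo g ExtDisc ExtDisc) (hlim : Tendsto (fun z => g z / z) (cobounded ℂ) (𝓝 1)) :
    EqOn g id ExtDisc := by
  -- the equality case of Schwarz's lemma for `u z = 1 / g (1 / z)` on the unit disc
  set u : ℂ → ℂ := Function.update (fun z => (g z⁻¹)⁻¹) 0 0
  have hu0 : u 0 = 0 := Function.update_self ..
  have hu : ∀ z ≠ 0, u z = (g z⁻¹)⁻¹ := fun z hz => Function.update_of_ne hz ..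
  have hderiv : HasDerivAt u 1 0 := hasDerivAt_update_inv_inv hlim
  have hmaps' : MapsTo u (ball 0 1) (closedBall (u 0) 1) := by
    intro z hz
    rw [hu0, mem_closedBall_zero_iff]
    rcases eq_or_ne z 0 with rfl | hz0
    · simp [hu0]
    · rw [hu z hz0, norm_inv]
      exact inv_le_one_of_one_le₀ (hmaps (inv_mem_extDisc hz hz0)).le
  have hdiff : DifferentiableOn ℂ u (ball 0 1) := by
    intro z hz
    rcases eq_or_ne z 0 with rfl | hz0
    · exact hderiv.differentiableAt.differentiableWithinAt
    have hzi := inv_mem_extDisc hz hz0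
    refine DifferentiableAt.differentiableWithinAt ?_
    refine (((hg.differentiableAt (isOpen_extDisc.mem_nhds hzi)).comp z
      (differentiableAt_inv hz0)).inv (ne_zero_of_mem_extDisc (hmaps hzi))).congr_of_eventuallyEq ?_
    filter_upwards [isOpen_ne.mem_nhds hz0] with w hw
    exact hu w hw
  have hds : dslope u 0 0 = 1 := by rw [dslope_same, hderiv.deriv]
  have hid := Complex.affine_of_mapsTo_ball_of_norm_dslope_eq_div hdiff hmaps'
    (mem_ball_self one_pos) (by rw [hds, norm_one, div_one])
  intro z hz
  have h := hid (inv_mem_ball_of_mem_extDisc hz)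
  rw [hu _ (inv_ne_zero (ne_zero_of_mem_extDisc hz)), hu0, hds, inv_inv] at h
  simpa using h

lemma tendsto_cobounded_of_tendsto_div {u : ℂ → ℂ} {a : ℂ} (ha : a ≠ 0)
    (h : Tendsto (fun z => u z / z) (cobounded ℂ) (𝓝 a)) :
    Tendsto u (cobounded ℂ) (cobounded ℂ) := by
  rw [← tendsto_norm_atTop_iff_cobounded]
  refine (h.norm.pos_mul_atTop (norm_pos_iff.mpr ha) tendsto_norm_cobounded_atTop).congr' ?_
  filter_upwards [eventually_ne_cobounded 0] with z hz
  rw [norm_div, div_mul_cancel₀ _ (norm_ne_zero_iff.mpr hz)]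

lemma tendsto_add_inv_add_two_div_sub_two_div {E : ℝ} {f : ℂ → ℂ} (hE : E ≠ 0)
    (hlim : Tendsto (fun z => f z / z) (cobounded ℂ) (𝓝 (E : ℂ))) :
    Tendsto (fun z => ((f z + (f z)⁻¹ + 2) / E - 2) / z) (cobounded ℂ) (𝓝 1) := by
  have hE' : (E : ℂ) ≠ 0 := ofReal_ne_zero.mpr hE
  have h := ((hlim.add (((hlim.inv₀ hE').mul (tendsto_inv₀_cobounded.pow 2)).add
    (tendsto_inv₀_cobounded.const_mul 2))).div_const (E : ℂ)).sub
    (tendsto_inv₀_cobounded.const_mul 2)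
  simp only [zero_pow two_ne_zero, mul_zero, add_zero, div_self hE', sub_zero] at h
  refine h.congr' ?_
  filter_upwards [eventually_ne_cobounded 0] with z hz
  rcases eq_or_ne (f z) 0 with hf | hf
  · simp [hf]
    ring
  · field_simp
    ring

lemma add_inv_add_two_eq_of_mapsTo_slit {d E : ℝ} {f : ℂ → ℂ} (hd : 0 < d)
    (hdE : (d + 2) ^ 2 / (d + 1) = 4 * E) (hf : DifferentiableOn ℂ f ExtDisc)
    (hmaps : MapsTo f ExtDisc (ExtDisc \ {w : ℂ | ∃ x : ℝ, 1 < x ∧ x ≤ 1 + d ∧ w = (x : ℂ)}))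
    (hlim : Tendsto (fun z => f z / z) (cobounded ℂ) (𝓝 (E : ℂ))) {z : ℂ} (hz : z ∈ ExtDisc) :
    f z + (f z)⁻¹ + 2 = E * (z + z⁻¹ + 2) := by
  have hE : E ≠ 0 := by
    have : 0 < (d + 2) ^ 2 / (d + 1) := by positivity
    exact (by linarith : 0 < E).ne'
  set ζ : ℂ → ℂ := fun z => (f z + (f z)⁻¹ + 2) / E - 2
  have hζ : ∀ z ∈ ExtDisc, ζ z ∉ ofReal '' Icc (-2) 2 := fun z hz =>
    add_inv_add_two_div_sub_two_notMem_segment hd hdE (hmaps hz).1 (hmaps hz).2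
  have hζlim := tendsto_add_inv_add_two_div_sub_two_div hE hlim
  have hζcob := tendsto_cobounded_of_tendsto_div one_ne_zero hζlim
  have hg : EqOn (joukowskiInv ∘ ζ) id ExtDisc := by
    refine eqOn_id_of_mapsTo_extDisc (fun z hz => ?_)
      (fun z hz => one_lt_norm_joukowskiInv (hζ z hz)) ?_
    · have hfz := hf.differentiableAt (isOpen_extDisc.mem_nhds hz)
      have hζz : DifferentiableAt ℂ ζ z := (((hfz.add (hfz.inv
        (ne_zero_of_mem_extDisc (hmaps hz).1))).add_const 2).div_const _).sub_const 2
      exact ((differentiableAt_joukowskiInv (hζ z hz)).comp z hζz).differentiableWithinAt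
    · have h := (tendsto_joukowskiInv_div_cobounded.comp hζcob).mul hζlim
      rw [mul_one] at h
      refine h.congr' ?_
      filter_upwards [hζcob.eventually_ne_cobounded 0] with z hz
      exact div_mul_div_cancel₀ hz
  have h := joukowskiInv_add_inv (hζ z hz)
  rw [show joukowskiInv (ζ z) = z from hg hz] at h
  have hE' : (E : ℂ) ≠ 0 := ofReal_ne_zero.mpr hE
  have hz0 := ne_zero_of_mem_extDisc hz
  have hfz0 := ne_zero_of_mem_extDisc (hmaps hz).1
  simp only [ζ] at h
  field_simp at h ⊢
  linear_combination -h

lemma mul_add_inv_add_two_eq_four {E a : ℂ} {f : ℂ → ℂ} (hf : ContinuousOn f {z | 1 ≤ ‖z‖})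
    (hfe : ∀ z ∈ ExtDisc, f z + (f z)⁻¹ + 2 = E * (z + z⁻¹ + 2)) (ha : ‖a‖ = 1) (hfa : f a = 1) :
    E * (a + a⁻¹ + 2) = 4 := by
  have ha_mem : a ∈ closure ExtDisc := by rw [closure_extDisc]; exact ha.ge
  have := mem_closure_iff_nhdsWithin_neBot.mp ha_mem
  have hfa' : Tendsto f (𝓝[ExtDisc] a) (𝓝 1) :=
    hfa ▸ ((hf a ha.ge).mono (closure_extDisc ▸ subset_closure)).tendsto
  have hlhs := (hfa'.add (hfa'.inv₀ one_ne_zero)).add_const 2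
  norm_num at hlhs
  have ha0 : a ≠ 0 := norm_ne_zero_iff.mp (by rw [ha]; exact one_ne_zero)
  have hrhs : ContinuousAt (fun z => E * (z + z⁻¹ + 2)) a := by fun_prop (disch := exact ha0)
  refine tendsto_nhds_unique (l := 𝓝[ExtDisc] a) (hrhs.tendsto.mono_left nhdsWithin_le_nhds) ?_
  exact hlhs.congr' (eventually_nhdsWithin_of_forall hfe)

lemma deriv_mul_one_sub_inv_sq {E z : ℂ} {f : ℂ → ℂ} (hz : z ≠ 0) (hf : DifferentiableAt ℂ f z)
    (hfz : f z ≠ 0) (hfe : ∀ᶠ w in 𝓝 z, f w + (f w)⁻¹ + 2 = E * (w + w⁻¹ + 2)) :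
    deriv f z * (1 - (f z ^ 2)⁻¹) = E * (1 - (z ^ 2)⁻¹) := by
  have hlhs := (hf.hasDerivAt.add (hf.hasDerivAt.inv hfz)).add_const 2
  have hrhs := (((hasDerivAt_id z).add (hasDerivAt_inv hz)).add_const 2).const_mul E
  have h := (hlhs.congr_of_eventuallyEq (hfe.mono fun _ hw => hw.symm)).unique hrhs
  linear_combination h

lemma sq_mul_eq_of_add_inv_add_two_eq {E F Z D A : ℂ} (hE : E ≠ 0) (hF : F ≠ 0) (hZ : Z ≠ 0)
    (hZ1 : Z + 1 ≠ 0) (hA : A ≠ 0) (hfe : F + F⁻¹ + 2 = E * (Z + Z⁻¹ + 2))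
    (hbd : E * (A + A⁻¹ + 2) = 4) (hD : D * (1 - (F ^ 2)⁻¹) = E * (1 - (Z ^ 2)⁻¹)) :
    D ^ 2 * ((Z - A) * (Z - A⁻¹)) * Z ^ 2 = ((Z - 1) * F) ^ 2 := by
  have hsq : (F - F⁻¹) ^ 2 * Z ^ 2 = E ^ 2 * ((Z + 1) ^ 2 * ((Z - A) * (Z - A⁻¹))) := by
    have h : (F - F⁻¹) ^ 2 = (F + F⁻¹ + 2) * (F + F⁻¹ + 2 - 4) := by field_simp; ring
    rw [h, hfe, ← hbd]
    field_simp
    ring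
  have hD' : D * (F - F⁻¹) * Z ^ 2 = E * ((Z - 1) * (Z + 1)) * F := by
    field_simp at hD ⊢
    linear_combination hD
  refine mul_left_cancel₀ (pow_ne_zero 2 (mul_ne_zero hE hZ1)) ?_
  calc (E * (Z + 1)) ^ 2 * (D ^ 2 * ((Z - A) * (Z - A⁻¹)) * Z ^ 2)
      = D ^ 2 * ((F - F⁻¹) ^ 2 * Z ^ 2) * Z ^ 2 := by rw [hsq]; ring
    _ = (D * (F - F⁻¹) * Z ^ 2) ^ 2 := by ring
    _ = (E * (Z + 1)) ^ 2 * ((Z - 1) * F) ^ 2 := by rw [hD']; ring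

lemma norm_eq_of_sq_mul_eq {D F Z A B : ℂ} (hZ : Z ≠ 0) (hA : Z ≠ A) (hB : Z ≠ B)
    (h : D ^ 2 * ((Z - A) * (Z - B)) * Z ^ 2 = ((Z - 1) * F) ^ 2) :
    ‖D‖ = ‖F‖ / ‖Z‖ * ‖Z - 1‖ / (√‖Z - A‖ * √‖Z - B‖) := by
  have ha : 0 < √‖Z - A‖ := Real.sqrt_pos.mpr (norm_pos_iff.mpr (sub_ne_zero.mpr hA))
  have hb : 0 < √‖Z - B‖ := Real.sqrt_pos.mpr (norm_pos_iff.mpr (sub_ne_zero.mpr hB))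
  have hz : 0 < ‖Z‖ := norm_pos_iff.mpr hZ
  have hn := congrArg norm h
  simp only [norm_mul, norm_pow] at hn
  rw [← Real.sq_sqrt (norm_nonneg (Z - A)), ← Real.sq_sqrt (norm_nonneg (Z - B))] at hn
  have h' : ‖D‖ * √‖Z - A‖ * √‖Z - B‖ * ‖Z‖ = ‖Z - 1‖ * ‖F‖ :=
    (sq_eq_sq₀ (by positivity) (by positivity)).mp (by linear_combination hn)
  field_simp
  linear_combination h'

theorem slit_map_derivative_formula_general
    (c d β : ℝ) (f : ℂ → ℂ)
    (hd0 : 0 < d) (hdc : (d + 2) ^ 2 / (d + 1) = 4 * Real.exp c)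
    (hf : IsSlitMap c d f)
    (hfβ : f (Complex.exp ((β : ℂ) * Complex.I)) = 1)
    (z : ℂ) (hz : z ∈ ExtDisc) :
    ‖deriv f z‖ =
      ‖f z‖ / ‖z‖ * ‖z - 1‖ /
        (Real.sqrt ‖z - Complex.exp ((β : ℂ) * Complex.I)‖ *
         Real.sqrt ‖z - Complex.exp (-(β : ℂ) * Complex.I)‖) := by
  obtain ⟨hcont, hdiff, -, himage, hlim⟩ := hf
  rw [comap_norm_atTop] at hlim
  set A := exp (β * I)
  have hA : ‖A‖ = 1 := norm_exp_ofReal_mul_I β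
  have hA0 : A ≠ 0 := exp_ne_zero _
  have hAinv : exp (-β * I) = A⁻¹ := by rw [← exp_neg, neg_mul]
  have hmaps := himage ▸ mapsTo_image f ExtDisc
  have hfe : ∀ w ∈ ExtDisc, f w + (f w)⁻¹ + 2 = Real.exp c * (w + w⁻¹ + 2) := fun w hw =>
    add_inv_add_two_eq_of_mapsTo_slit hd0 hdc hdiff hmaps hlim hw
  have hz0 := ne_zero_of_mem_extDisc hz
  have hfz0 := ne_zero_of_mem_extDisc (hmaps hz).1
  have hD := deriv_mul_one_sub_inv_sq hz0 (hdiff.differentiableAt (isOpen_extDisc.mem_nhds hz))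
    hfz0 (eventually_of_mem (isOpen_extDisc.mem_nhds hz) hfe)
  have hZ1 : z + 1 ≠ 0 := by
    rw [← sub_neg_eq_add, sub_ne_zero]
    exact ne_of_mem_extDisc_of_norm_le_one hz (by simp)
  rw [hAinv]
  refine norm_eq_of_sq_mul_eq hz0 (ne_of_mem_extDisc_of_norm_le_one hz hA.le)
    (ne_of_mem_extDisc_of_norm_le_one hz (by simp [hA])) (sq_mul_eq_of_add_inv_add_two_eq
    (ofReal_ne_zero.mpr (Real.exp_pos c).ne') hfz0 hz0 hZ1 hA0 (hfe z hz)
    (mul_add_inv_add_two_eq_four hcont hfe hA hfβ) hD)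

/-- Explicit formula for the modulus of the derivative of the slit map:
`|f'(z)| = (|f(z)|/|z|)·|z−1| / (|z−e^{iβ}|^{1/2}·|z−e^{−iβ}|^{1/2})` on `Δ`. -/
theorem slit_map_derivative_formula
    (c d β : ℝ) (f : ℂ → ℂ)
    (hc0 : 0 < c) (hc1 : c < 1)
    (hd0 : 0 < d) (hdc : (d + 2) ^ 2 / (d + 1) = 4 * Real.exp c)
    (hf : IsSlitMap c d f)
    (hβ0 : 0 < β) (hβπ : β < Real.pi)
    (hfβ : f (Complex.exp ((β : ℂ) * Complex.I)) = 1)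
    (z : ℂ) (hz : z ∈ ExtDisc) :
    ‖deriv f z‖ =
      ‖f z‖ / ‖z‖ * ‖z - 1‖ /
        (Real.sqrt ‖z - Complex.exp ((β : ℂ) * Complex.I)‖ *
         Real.sqrt ‖z - Complex.exp (-(β : ℂ) * Complex.I)‖) :=
  slit_map_derivative_formula_general c d β f hd0 hdc hf hfβ z hz
end

section
/- Fix a real η > 1. There exists a constant A > 0, depending only on η, such that for all real numbers σ, c with 0 < σ ≤ c ≤ 1, ∫_{−c}^{c} |e^{σ + iθ} − 1|^{−η} dθ ≥ A·σ^{1−η}. -/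
/-! For `|θ| ≤ σ` the point `σ + iθ` has modulus at most `2σ`, so `|e^{σ+iθ} - 1| ≤ 2e²σ` there.
The integrand is nonnegative, so the integral over `[-c, c]` is at least the length `2σ` of this
window times `(2e²σ)^{-η}`, which is `2(2e²)^{-η} σ^{1-η}`. -/

theorem Complex.exp_sub_one_ne_zero_of_re_ne_zero {z : ℂ} (hz : z.re ≠ 0) : exp z - 1 ≠ 0 := by
  intro h
  have : Real.exp z.re = 1 := by rw [← norm_exp, sub_eq_zero.mp h, norm_one]
  exact hz (Real.exp_eq_one_iff _ |>.mp this)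

theorem Complex.norm_exp_sub_one_le_norm_mul_exp (z : ℂ) :
    ‖exp z - 1‖ ≤ ‖z‖ * Real.exp ‖z‖ := by
  simpa using norm_exp_sub_sum_le_norm_mul_exp z 1

theorem norm_exp_add_mul_I_sub_one_le {σ θ : ℝ} (hσ1 : σ ≤ 1) (hθ : |θ| ≤ σ) :
    ‖Complex.exp ((σ : ℂ) + (θ : ℂ) * Complex.I) - 1‖ ≤ 2 * Real.exp 2 * σ := by
  have hσ : 0 ≤ σ := (abs_nonneg θ).trans hθ
  have hz : ‖(σ : ℂ) + (θ : ℂ) * Complex.I‖ ≤ 2 * σ :=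
    calc ‖(σ : ℂ) + (θ : ℂ) * Complex.I‖ ≤ |σ| + |θ| := by
          simpa using norm_add_le (σ : ℂ) ((θ : ℂ) * Complex.I)
      _ ≤ 2 * σ := by rw [abs_of_nonneg hσ]; linarith
  calc _ ≤ ‖(σ : ℂ) + (θ : ℂ) * Complex.I‖ * Real.exp ‖(σ : ℂ) + (θ : ℂ) * Complex.I‖ :=
        Complex.norm_exp_sub_one_le_norm_mul_exp _
    _ ≤ 2 * σ * Real.exp 2 := by gcongr; linarith
    _ = 2 * Real.exp 2 * σ := by ring

theorem continuous_norm_exp_add_mul_I_sub_one_rpow {σ : ℝ} (hσ : σ ≠ 0) (p : ℝ) :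
    Continuous fun θ : ℝ => ‖Complex.exp ((σ : ℂ) + (θ : ℂ) * Complex.I) - 1‖ ^ p := by
  refine Continuous.rpow_const (by fun_prop) fun θ => Or.inl ?_
  exact norm_ne_zero_iff.mpr (Complex.exp_sub_one_ne_zero_of_re_ne_zero (by simpa using hσ))

theorem intervalIntegral.mul_le_integral_of_le_on_subinterval {f : ℝ → ℝ} {a b c d m : ℝ}
    (hca : c ≤ a) (hab : a ≤ b) (hbd : b ≤ d) (hf : IntervalIntegrable f MeasureTheory.volume c d)
    (hf0 : ∀ x ∈ Set.Icc c d, 0 ≤ f x) (hm : ∀ x ∈ Set.Icc a b, m ≤ f x) :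
    (b - a) * m ≤ ∫ x in c..d, f x := by
  have hfab : IntervalIntegrable f MeasureTheory.volume a b :=
    hf.mono_set (by rw [Set.uIcc_of_le hab, Set.uIcc_of_le (hca.trans (hab.trans hbd))]
                    exact Set.Icc_subset_Icc hca hbd)
  calc (b - a) * m = ∫ _ in a..b, m := by simp
    _ ≤ ∫ x in a..b, f x := integral_mono_on hab intervalIntegrable_const hfab hm
    _ ≤ ∫ x in c..d, f x := integral_mono_interval hca hab hbd
          ((MeasureTheory.ae_restrict_iff' measurableSet_Ioc).mpr
            (Filter.Eventually.of_forall fun x hx => hf0 x (Set.Ioc_subset_Icc_self hx))) hf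

/-- For fixed `η > 1` there is `A > 0` (depending only on `η`) such that for all
`0 < σ ≤ c ≤ 1`, `∫_{−c}^{c} |e^{σ+iθ} − 1|^{−η} dθ ≥ A·σ^{1−η}`. -/
theorem regularized_density_integral_lower_bound (η : ℝ) (hη : 1 < η) :
    ∃ A : ℝ, 0 < A ∧
      ∀ σ c : ℝ, 0 < σ → σ ≤ c → c ≤ 1 →
        A * σ ^ (1 - η) ≤
          ∫ θ in (-c)..c,
            ‖Complex.exp ((σ : ℂ) + (θ : ℂ) * Complex.I) - 1‖ ^ (-η) := by
  refine ⟨2 * (2 * Real.exp 2) ^ (-η), by positivity, fun σ c hσ hσc hc1 => ?_⟩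
  have hlower : ∀ θ ∈ Set.Icc (-σ) σ, (2 * Real.exp 2 * σ) ^ (-η) ≤
      ‖Complex.exp ((σ : ℂ) + (θ : ℂ) * Complex.I) - 1‖ ^ (-η) := fun θ hθ =>
    Real.rpow_le_rpow_of_nonpos
      (norm_pos_iff.mpr (Complex.exp_sub_one_ne_zero_of_re_ne_zero (by simpa using hσ.ne')))
      (norm_exp_add_mul_I_sub_one_le (hσc.trans hc1) (abs_le.mpr hθ)) (by linarith)
  calc 2 * (2 * Real.exp 2) ^ (-η) * σ ^ (1 - η) = (σ - -σ) * (2 * Real.exp 2 * σ) ^ (-η) := by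
        rw [Real.mul_rpow (by positivity) hσ.le, sub_eq_add_neg 1, Real.rpow_add hσ,
          Real.rpow_one]
        ring
    _ ≤ _ := intervalIntegral.mul_le_integral_of_le_on_subinterval (by linarith) (by linarith) hσc
        ((continuous_norm_exp_add_mul_I_sub_one_rpow hσ.ne' _).intervalIntegrable _ _)
        (fun _ _ => by positivity) hlower
end
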